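/- Consider the linear system (for fixed x, suppressed): E†_{00} = −P_{10}γ† + b, E†_{01} = −P_{11}γ† + b + ω†, E†_{10} = β† + P_{00}γ† + b, E†_{11} = β† + P_{01}γ† + b + ω†, in unknowns β†, γ†(0)=γ†(1)=γ†, b, with known ω† and P_{az} (P_{0z} = 1−P_{1z}, P_{11} ≠ P_{10}). Then β† = (E[Y | Z=1] − E[Y | Z=0] − ω†) / (P_{11} − P_{10}), where E[Y | Z=z] := E†_{1z}P_{1z} + E†_{0z}P_{0z}. -/
import Mathlib


open MeasureTheory

/-- Conditional expectation of `W` given the event `s`. -/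
noncomputable def cexp {Ω : Type*} [MeasurableSpace Ω] (μ : Measure Ω)
    (W : Ω → ℝ) (s : Set Ω) : ℝ :=
  (∫ ω in s, W ω ∂μ) / (μ s).toReal

/-- Conditional probability of `s` given the event `t`. -/
noncomputable def cpr {Ω : Type*} [MeasurableSpace Ω] (μ : Measure Ω)
    (s t : Set Ω) : ℝ :=
  (μ (s ∩ t)).toReal / (μ t).toReal

/-- Conditional independence of the random variable `W` and the event `s`,
given the event `C`. -/
def CIset {Ω : Type*} [MeasurableSpace Ω] (μ : Measure Ω) {β : Type*} [MeasurableSpace β]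
    (W : Ω → β) (s C : Set Ω) : Prop :=
  ∀ S : Set β, MeasurableSet S →
    (μ (W ⁻¹' S ∩ s ∩ C)).toReal * (μ C).toReal
      = (μ (W ⁻¹' S ∩ C)).toReal * (μ (s ∩ C)).toReal

/-- Conditional independence of the random variables `W1` and `W2`
given the event `C`. -/
def CIfun2 {Ω : Type*} [MeasurableSpace Ω] (μ : Measure Ω)
    {β1 β2 : Type*} [MeasurableSpace β1] [MeasurableSpace β2]
    (W1 : Ω → β1) (W2 : Ω → β2) (C : Set Ω) : Prop :=
  ∀ (S1 : Set β1) (S2 : Set β2), MeasurableSet S1 → MeasurableSet S2 →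
    (μ (W1 ⁻¹' S1 ∩ W2 ⁻¹' S2 ∩ C)).toReal * (μ C).toReal
      = (μ (W1 ⁻¹' S1 ∩ C)).toReal * (μ (W2 ⁻¹' S2 ∩ C)).toReal

/-- Domain indicator: observational (`O`) or experimental (`E`). -/
inductive Dom : Type
  | O
  | E
deriving DecidableEq

/-- Conditional CDF of `W` given the event `C`. -/
noncomputable def ccdf {Ω : Type*} [MeasurableSpace Ω] (μ : Measure Ω)
    (W : Ω → ℝ) (C : Set Ω) (w : ℝ) : ℝ :=
  (μ ({ω | W ω ≤ w} ∩ C)).toReal / (μ C).toReal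


theorem stmt11 (E00 E01 E10 E11 P10 P11 P00 P01 ωdag : ℝ)
    (βdag γdag b : ℝ)
    (hP00 : P00 = 1 - P10) (hP01 : P01 = 1 - P11)
    (h00 : E00 = -P10 * γdag + b)
    (h01 : E01 = -P11 * γdag + b + ωdag)
    (h10 : E10 = βdag + P00 * γdag + b)
    (h11 : E11 = βdag + P01 * γdag + b + ωdag)
    (hP : P11 ≠ P10) :
    βdag = ((E11 * P11 + E01 * P01) - (E10 * P10 + E00 * P00) - ωdag) / (P11 - P10) := by
  subst hP00 hP01 h00 h01 h10 h11
  have h : P11 - P10 ≠ 0 := sub_ne_zero.mpr hP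
  field_simp
  ring
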